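/- Let q be a prime power and let n > k ≥ 1 be integers. If there exists an (n,k,q) systematic code whose minimum distance is at least d ≥ 2, and r is an integer with 0 ≤ r ≤ min{⌊(d−1)/2⌋, k}, then |B(r,k)| ≤ A_q(n−k, d−2r). -/

import Mathlib

/-- `|B(l,m)| = ∑_{j=0}^{l} C(m,j)(q−1)^j`, the number of vectors of `F_q^m`
of Hamming weight at most `l`. -/
def ballCard (q l m : ℕ) : ℕ := ∑ j ∈ Finset.range (l + 1), m.choose j * (q - 1) ^ j

/-- `A_q(n,d)`: the maximum cardinality of a (nonempty) code `C ⊆ F^n` in which any two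
distinct words are at Hamming distance at least `d`. -/
noncomputable def maxCodeCard (F : Type) [Fintype F] [DecidableEq F] (n d : ℕ) : ℕ :=
  sSup {M | ∃ C : Finset (Fin n → F), C.Nonempty ∧ C.card = M ∧
    ∀ c ∈ C, ∀ c' ∈ C, c ≠ c' → d ≤ hammingDist c c'}

/-- `C` is an `(n,k,q)` systematic code: the image of an injective map
`φ : F^k → F^n` which is the identity on the first `k` coordinates. -/
def IsSystematicCode {F : Type} [Fintype F] [DecidableEq F] {n : ℕ} (k : ℕ)
    (C : Finset (Fin n → F)) : Prop :=
  ∃ φ : (Fin k → F) → (Fin n → F), Function.Injective φ ∧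
    (∀ v : Fin k → F, ∀ i : Fin n, ∀ h : (i : ℕ) < k, φ v i = v ⟨i, h⟩) ∧
    C = Finset.image φ Finset.univ

/-! Write each codeword as `(v, ψ v)`, with `ψ v` its last `n - k` coordinates. Two messages in
the Hamming ball of radius `r` about `0` differ in at most `2r` information coordinates, so their
codewords differ in at least `d - 2r` redundancy coordinates. Hence `ψ` maps this ball, of size
`|B(r,k)|`, injectively onto a code of length `n - k` and minimum distance `d - 2r ≥ 1`. -/

open Finset

section Counting

variable {ι F : Type*} [Fintype ι] [DecidableEq ι] [Fintype F] [DecidableEq F] [Zero F]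

lemma card_filter_support_eq (s : Finset ι) :
    #{v : ι → F | ({i | v i ≠ 0} : Finset ι) = s} = (Fintype.card F - 1) ^ #s := by
  have hpi : ({v : ι → F | ({i | v i ≠ 0} : Finset ι) = s} : Finset (ι → F)) =
      Fintype.piFinset fun i => if i ∈ s then univ.erase 0 else {0} := by
    ext v
    simp only [mem_filter, mem_univ, true_and, Fintype.mem_piFinset, Finset.ext_iff]
    refine forall_congr' fun i => ?_
    split_ifs with hi <;> simp [hi]
  simp [hpi, apply_ite card, prod_ite_mem]

lemma card_hammingNorm_eq (j : ℕ) :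
    #{v : ι → F | hammingNorm v = j} =
      (Fintype.card ι).choose j * (Fintype.card F - 1) ^ j := by
  rw [card_eq_sum_card_fiberwise (s := {v : ι → F | hammingNorm v = j})
    (f := fun v : ι → F => ({i | v i ≠ 0} : Finset ι)) (t := powersetCard j univ)
    fun v hv => mem_powersetCard.2 ⟨subset_univ _, (mem_filter.1 hv).2⟩]
  rw [sum_congr rfl fun s hs => ?_, sum_const, card_powersetCard, card_univ, smul_eq_mul]
  rw [filter_filter, ← (mem_powersetCard.1 hs).2, ← card_filter_support_eq]
  congr 1
  ext v
  simp only [mem_filter, mem_univ, true_and, and_iff_right_iff_imp]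
  rintro rfl
  rfl

lemma card_hammingNorm_le (r : ℕ) :
    #{v : ι → F | hammingNorm v ≤ r} = ballCard (Fintype.card F) r (Fintype.card ι) := by
  rw [card_eq_sum_card_fiberwise (s := {v : ι → F | hammingNorm v ≤ r})
    (f := hammingNorm) (t := range (r + 1))
    fun v hv => mem_range.2 (Nat.lt_succ_of_le (mem_filter.1 hv).2)]
  refine sum_congr rfl fun j hj => ?_
  rw [← card_hammingNorm_eq, filter_filter]
  congr 1
  ext v
  simp only [mem_filter, mem_univ, true_and, and_iff_right_iff_imp]
  rintro rfl
  exact Nat.le_of_lt_succ (mem_range.1 hj)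

end Counting

lemma hammingDist_le_add_of_cover {ι κ μ β : Type*} [Fintype ι] [Fintype κ] [Fintype μ]
    [DecidableEq ι] [DecidableEq β] (f : κ → ι) (g : μ → ι)
    (hfg : ∀ i, i ∈ Set.range f ∨ i ∈ Set.range g) (x y : ι → β) :
    hammingDist x y ≤ hammingDist (x ∘ f) (y ∘ f) + hammingDist (x ∘ g) (y ∘ g) := by
  have hcover : ({i | x i ≠ y i} : Finset ι) ⊆
      ({a | x (f a) ≠ y (f a)} : Finset κ).image f ∪
        ({b | x (g b) ≠ y (g b)} : Finset μ).image g := by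
    intro i hi
    rw [mem_filter] at hi
    rcases hfg i with ⟨a, rfl⟩ | ⟨b, rfl⟩
    · exact mem_union_left _ (mem_image_of_mem f (by simpa using hi.2))
    · exact mem_union_right _ (mem_image_of_mem g (by simpa using hi.2))
  exact (card_le_card hcover).trans <| (card_union_le _ _).trans <|
    add_le_add card_image_le card_image_le

lemma hammingDist_le_add_take_drop {β : Type*} [DecidableEq β] {k n : ℕ} (hkn : k ≤ n)
    (x y : Fin n → β) :
    hammingDist x y ≤ hammingDist (x ∘ Fin.castLE hkn) (y ∘ Fin.castLE hkn) +
      hammingDist (fun i : Fin (n - k) => x ⟨k + i, by omega⟩)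
        (fun i : Fin (n - k) => y ⟨k + i, by omega⟩) := by
  refine hammingDist_le_add_of_cover _ (fun i : Fin (n - k) => (⟨k + i, by omega⟩ : Fin n))
    (fun i => ?_) x y
  by_cases hi : (i : ℕ) < k
  · exact Or.inl ⟨⟨i, hi⟩, rfl⟩
  · exact Or.inr ⟨⟨i - k, by omega⟩, Fin.ext (by simp; omega)⟩

lemma hammingDist_le_hammingNorm_add {ι : Type*} {β : ι → Type*} [Fintype ι]
    [∀ i, DecidableEq (β i)] [∀ i, Zero (β i)] (x y : ∀ i, β i) :
    hammingDist x y ≤ hammingNorm x + hammingNorm y := by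
  simpa [hammingDist_comm 0 y] using hammingDist_triangle x 0 y

lemma card_le_maxCodeCard {F : Type} [Fintype F] [DecidableEq F] {α : Type*} {n d : ℕ}
    (hd : 1 ≤ d) (B : Finset α) (hB : B.Nonempty) (ψ : α → Fin n → F)
    (hψ : ∀ v ∈ B, ∀ v' ∈ B, v ≠ v' → d ≤ hammingDist (ψ v) (ψ v')) :
    #B ≤ maxCodeCard F n d := by
  classical
  have hinj : Set.InjOn ψ B := fun v hv v' hv' h => by
    by_contra hne
    have := hψ v hv v' hv' hne
    rw [h, hammingDist_self] at this
    omega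
  rw [← card_image_of_injOn hinj]
  refine le_csSup ⟨Fintype.card (Fin n → F), ?_⟩ ⟨_, hB.image ψ, rfl, ?_⟩
  · rintro M ⟨C, -, rfl, -⟩
    exact card_le_univ C
  · simp only [mem_image]
    rintro _ ⟨v, hv, rfl⟩ _ ⟨v', hv', rfl⟩ hne
    exact hψ v hv v' hv' fun h => hne (h ▸ rfl)

theorem litsyn_laihonen_systematic_general (q n k d r : ℕ)
    (F : Type) [Field F] [Fintype F] [DecidableEq F] (hF : Fintype.card F = q)
    (hkn : k < n) (hd : 2 ≤ d) (hr : r ≤ min ((d - 1) / 2) k)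
    (C : Finset (Fin n → F)) (hsys : IsSystematicCode k C)
    (hCdist : ∀ c ∈ C, ∀ c' ∈ C, c ≠ c' → d ≤ hammingDist c c') :
    ballCard q r k ≤ maxCodeCard F (n - k) (d - 2 * r) := by
  obtain ⟨φ, hφ_inj, hφ_sys, rfl⟩ := hsys
  have h2r : 2 * r < d := by have := (le_min_iff.1 hr).1; omega
  have htake : ∀ v, φ v ∘ Fin.castLE hkn.le = v := fun v => funext fun i => hφ_sys v _ i.2
  let ψ : (Fin k → F) → Fin (n - k) → F := fun v i => φ v ⟨k + i, by omega⟩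
  have hψ : ∀ v v', hammingNorm v ≤ r → hammingNorm v' ≤ r → v ≠ v' →
      d - 2 * r ≤ hammingDist (ψ v) (ψ v') := by
    intro v v' hv hv' hne
    have hfar := hCdist _ (mem_image_of_mem φ (mem_univ v)) _ (mem_image_of_mem φ (mem_univ v'))
      (hφ_inj.ne hne)
    have hsplit : hammingDist (φ v) (φ v') ≤ hammingDist v v' + hammingDist (ψ v) (ψ v') := by
      simpa only [htake] using hammingDist_le_add_take_drop hkn.le (φ v) (φ v')
    have hnear := hammingDist_le_hammingNorm_add v v'
    omega
  calc ballCard q r k = #{v : Fin k → F | hammingNorm v ≤ r} := by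
        rw [card_hammingNorm_le, hF, Fintype.card_fin]
    _ ≤ maxCodeCard F (n - k) (d - 2 * r) :=
        card_le_maxCodeCard (by omega) _ ⟨0, by simp⟩ ψ fun v hv v' hv' =>
          hψ v v' (mem_filter.1 hv).2 (mem_filter.1 hv').2

/-- The Litsyn–Laihonen bound in the systematic case. -/
theorem litsyn_laihonen_systematic (q n k d r : ℕ) (hq : IsPrimePow q)
    (F : Type) [Field F] [Fintype F] [DecidableEq F] (hF : Fintype.card F = q)
    (hk : 1 ≤ k) (hkn : k < n) (hd : 2 ≤ d) (hr : r ≤ min ((d - 1) / 2) k)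
    (C : Finset (Fin n → F)) (hsys : IsSystematicCode k C)
    (hCdist : ∀ c ∈ C, ∀ c' ∈ C, c ≠ c' → d ≤ hammingDist c c') :
    ballCard q r k ≤ maxCodeCard F (n - k) (d - 2 * r) :=
  litsyn_laihonen_systematic_general q n k d r F hF hkn hd hr C hsys hCdist
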